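/- Let j ∈ ℕ₊, z_j ∈ ℤ∖{0} and q ∈ ℝ with q + j − 1 < 0. Then Σ_{z_1∈ℤ} Σ_{z_2∈ℤ} ⋯ Σ_{z_{j−1}∈ℤ} |(z_1, z_2, …, z_{j−1}, z_j)|^q ≤ C_{ind}(j,q) |z_j|^{q+j−1}, where |·| is the Euclidean norm on ℝ^j and C_{ind}(j,q) is a positive constant depending only on j and q. -/

import Mathlib

open MeasureTheory Filter Topology
open scoped ENNReal

noncomputable section

abbrev E (d : ℕ) := EuclideanSpace ℝ (Fin d)

/-- Embedding of `ℤ^d` into `ℝ^d` (with the Euclidean norm). -/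
def emb (d : ℕ) (z : Fin d → ℤ) : E d := WithLp.toLp 2 (fun i => (z i : ℝ))

/-- The last coordinate index. -/
def lastIdx (d : ℕ) (hd : 0 < d) : Fin d := ⟨d - 1, Nat.sub_lt hd Nat.one_pos⟩

/-- The open lower half-space `ℝ^{d-1} × (-∞,0)`. -/
def Hneg (d : ℕ) (hd : 0 < d) : Set (E d) := {u | u (lastIdx d hd) < 0}

/-- The open upper half-space `ℝ^{d-1} × (0,∞)`. -/
def Hpos (d : ℕ) (hd : 0 < d) : Set (E d) := {u | 0 < u (lastIdx d hd)}

/-- Truncated regional fractional Laplacian. -/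
def fracTrunc (d : ℕ) (cg γ : ℝ) (O : Set (E d)) (g : E d → ℝ) (ε : ℝ) (u : E d) : ℝ :=
  cg * ∫ v in {v ∈ O | ε ≤ dist v u}, (g u - g v) / dist v u ^ ((d : ℝ) + γ)

/-- `L` is the value of the regional fractional Laplacian of `g` at `u` (with the
convention that the value is `0` outside `O`). -/
def HasRegFracLap (d : ℕ) (cg γ : ℝ) (O : Set (E d)) (g : E d → ℝ) (u : E d) (L : ℝ) : Prop :=
  (u ∈ O ∧ Tendsto (fun ε => fracTrunc d cg γ O g ε u) (𝓝[>] 0) (𝓝 L)) ∨ (u ∉ O ∧ L = 0)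

open Classical in
/-- The regional fractional Laplacian (as a limit, with junk value when it does not exist,
and `0` outside of `O`). -/
def regFracLap (d : ℕ) (cg γ : ℝ) (O : Set (E d)) (g : E d → ℝ) (u : E d) : ℝ :=
  if u ∈ O then limUnder (𝓝[>] (0:ℝ)) (fun ε => fracTrunc d cg γ O g ε u) else 0

/-- Partial derivative in direction `e_j`. -/
def pd (d : ℕ) (f : E d → ℝ) (j : Fin d) (u : E d) : ℝ :=
  fderiv ℝ f u (EuclideanSpace.single j 1)

/-- `[G_s]_k(u)`: absolute value of `G_s(u)` plus the sum of the absolute values of all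
spatial partial derivatives of order at most `k ≤ 2`. -/
def bracket (d : ℕ) (G : ℝ → E d → ℝ) (k : ℕ) (s : ℝ) (u : E d) : ℝ :=
  |G s u| + (if 1 ≤ k then ∑ j : Fin d, |pd d (G s) j u| else 0)
    + (if 2 ≤ k then ∑ i : Fin d, ∑ j : Fin d, |pd d (fun w => pd d (G s) j w) i u| else 0)

/-- The seminorm `⦀G⦀_{r,k}`. -/
def bnorm (T : ℝ) (d : ℕ) (G : ℝ → E d → ℝ) (r k : ℕ) : ℝ :=
  ⨆ p : Set.Icc (0:ℝ) T × E d, ‖p.2‖ ^ r * bracket d G k (p.1 : ℝ) p.2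

/-- The class `𝒮²(ℝ^d)`. -/
structure MemS2 (T : ℝ) (d : ℕ) (G : ℝ → E d → ℝ) : Prop where
  cont : ContinuousOn (fun p : ℝ × E d => G p.1 p.2) (Set.Icc (0:ℝ) T ×ˢ Set.univ)
  smooth : ∀ s ∈ Set.Icc (0:ℝ) T, ContDiff ℝ 2 (G s)
  cont1 : ∀ j : Fin d,
    ContinuousOn (fun p : ℝ × E d => pd d (G p.1) j p.2) (Set.Icc (0:ℝ) T ×ˢ Set.univ)
  cont2 : ∀ i j : Fin d,
    ContinuousOn (fun p : ℝ × E d => pd d (fun w => pd d (G p.1) j w) i p.2)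
      (Set.Icc (0:ℝ) T ×ˢ Set.univ)
  bdd : ∀ r : ℕ, BddAbove (Set.range fun p : Set.Icc (0:ℝ) T × E d =>
      ‖p.2‖ ^ r * bracket d G 2 (p.1 : ℝ) p.2)

/-- The class `𝒮_c²(ℝ^d)`. -/
structure MemS2c (T : ℝ) (d : ℕ) (G : ℝ → E d → ℝ) : Prop where
  mem : MemS2 T d G
  csupp : ∃ K : Set (E d), IsCompact K ∧ ∀ s ∈ Set.Icc (0:ℝ) T, ∀ u ∉ K, G s u = 0

/-- The constant `b_G`. -/
def bG (T : ℝ) (d : ℕ) (G : ℝ → E d → ℝ) : ℝ :=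
  sInf {b : ℝ | 1 < b ∧ ∀ u : E d, b ≤ ‖u‖ → ∀ s ∈ Set.Icc (0:ℝ) T, G s u = 0}

open Classical in
/-- The class `𝒮_γ^d`. -/
def MemSgamCal (T : ℝ) (d : ℕ) (γ : ℝ) (G : ℝ → E d → ℝ) : Prop :=
  if 1 < γ ∧ d = 1 then MemS2 T d G else MemS2c T d G

open Classical in
/-- Functions glued, at the hyperplane `u_d = 0`, from two functions of class `P`. -/
def GluedFrom (d : ℕ) (hd : 0 < d) (P : (ℝ → E d → ℝ) → Prop) (G : ℝ → E d → ℝ) : Prop :=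
  ∃ Gm Gp : ℝ → E d → ℝ, P Gm ∧ P Gp ∧
    ∀ s u, G s u = if u (lastIdx d hd) < 0 then Gm s u else Gp s u

/-- Time derivative `∂_s G`. -/
def tderiv (d : ℕ) (G : ℝ → E d → ℝ) (s : ℝ) (u : E d) : ℝ := deriv (fun t => G t u) s

/-- The class `C^{1,2}([0,T] × ℝ^d)`. -/
structure MemC12 (T : ℝ) (d : ℕ) (G : ℝ → E d → ℝ) : Prop where
  cont : ContinuousOn (fun p : ℝ × E d => G p.1 p.2) (Set.Icc (0:ℝ) T ×ˢ Set.univ)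
  smooth : ∀ s ∈ Set.Icc (0:ℝ) T, ContDiff ℝ 2 (G s)
  tdiff : ∀ u : E d, ∀ s ∈ Set.Icc (0:ℝ) T, DifferentiableAt ℝ (fun t => G t u) s
  tcont : ContinuousOn (fun p : ℝ × E d => tderiv d G p.1 p.2) (Set.Icc (0:ℝ) T ×ˢ Set.univ)
  cont1 : ∀ j : Fin d,
    ContinuousOn (fun p : ℝ × E d => pd d (G p.1) j p.2) (Set.Icc (0:ℝ) T ×ˢ Set.univ)
  cont2 : ∀ i j : Fin d,
    ContinuousOn (fun p : ℝ × E d => pd d (fun w => pd d (G p.1) j w) i p.2)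
      (Set.Icc (0:ℝ) T ×ˢ Set.univ)

/-- The class `C_c^{1,2}([0,T] × ℝ^d)`. -/
structure MemCc12 (T : ℝ) (d : ℕ) (G : ℝ → E d → ℝ) : Prop where
  mem : MemC12 T d G
  csupp : ∃ K : Set (E d), IsCompact K ∧ ∀ s ∈ Set.Icc (0:ℝ) T, ∀ u ∉ K, G s u = 0

/-- The class `S^{1,2}([0,T] × ℝ^d)`. -/
structure MemS12 (T : ℝ) (d : ℕ) (G : ℝ → E d → ℝ) : Prop where
  mem : MemC12 T d G
  tsmooth : ∀ s ∈ Set.Icc (0:ℝ) T, ContDiff ℝ 2 (fun u => tderiv d G s u)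
  bdd : ∀ k : ℕ, BddAbove (Set.range fun p : Set.Icc (0:ℝ) T × E d =>
      ‖p.2‖ ^ k * (bracket d G 2 (p.1 : ℝ) p.2 + bracket d (tderiv d G) 2 (p.1 : ℝ) p.2))

open Classical in
/-- The class `S_γ^d`. -/
def MemSgam (T : ℝ) (d : ℕ) (γ : ℝ) (G : ℝ → E d → ℝ) : Prop :=
  if 1 < γ ∧ d = 1 then MemS12 T d G else MemCc12 T d G

/-- The class `S_{γ,0}^d`. -/
def MemSgam0 (T : ℝ) (d : ℕ) (hd : 0 < d) (γ : ℝ) (G : ℝ → E d → ℝ) : Prop :=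
  GluedFrom d hd (MemSgam T d γ) G

open Classical in
/-- The class `S_{γ,κ}^d`. -/
def MemSgamK (T : ℝ) (d : ℕ) (hd : 0 < d) (γ κ : ℝ) (G : ℝ → E d → ℝ) : Prop :=
  if κ = 0 then MemSgam0 T d hd γ G else MemSgam T d γ G

/-- The kernel `K_H^γ(u,v)`. -/
def Kg (d : ℕ) (cg γ : ℝ) (H : E d → ℝ) (u v : E d) : ℝ :=
  cg * (H u - H v) / ‖u - v‖ ^ ((d : ℝ) + γ)

open Classical in
/-- Discrete regional fractional Laplacian `Δ_{n,C}^{γ/2}` associated to a set of bonds. -/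
def discOp (d : ℕ) (cg γ : ℝ) (n : ℕ) (rel : (Fin d → ℤ) → (Fin d → ℤ) → Prop)
    (H : E d → ℝ) (x : Fin d → ℤ) : ℝ :=
  (n : ℝ)⁻¹ ^ d * ∑' y : Fin d → ℤ,
    if rel x y then Kg d cg γ H ((n : ℝ)⁻¹ • emb d x) ((n : ℝ)⁻¹ • emb d y) else 0

/-- `{x,y}` is a slow bond. -/
def slowRel (d : ℕ) (hd : 0 < d) (x y : Fin d → ℤ) : Prop :=
  (x (lastIdx d hd) < 0 ∧ 0 ≤ y (lastIdx d hd)) ∨ (y (lastIdx d hd) < 0 ∧ 0 ≤ x (lastIdx d hd))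

/-- `{x,y}` is a fast bond. -/
def fastRel (d : ℕ) (hd : 0 < d) (x y : Fin d → ℤ) : Prop :=
  x ≠ y ∧ ¬ slowRel d hd x y

/-- The distorted fractional Laplacian `𝕃_κ^γ`. -/
def Lkappa (d : ℕ) (hd : 0 < d) (cg γ κ : ℝ) (g : E d → ℝ) (u : E d) : ℝ :=
  κ * regFracLap d cg γ Set.univ g u
    + (1 - κ) * (regFracLap d cg γ (Hneg d hd) g u + regFracLap d cg γ (Hpos d hd) g u)

/-- The sequence `r_n^γ`. -/
def rn (γ : ℝ) (n : ℕ) : ℝ :=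
  if γ < 1 then 1 else if γ = 1 then Real.log n else (n : ℝ) ^ (γ - 1)

open Classical in
/-- The long-range transition probability `p_γ`. -/
def pgam (d : ℕ) (cg γ : ℝ) (z : Fin d → ℤ) : ℝ :=
  if z = 0 then 0 else cg * ‖emb d z‖ ^ (-((d : ℝ) + γ))

/-- The symmetric second difference `Δ_w G_s(u)`. -/
def ddiff (d : ℕ) (G : ℝ → E d → ℝ) (s : ℝ) (w u : E d) : ℝ :=
  G s (u + w) - 2 * G s u + G s (u - w)

/-- The discrete gradient `∇_j^{(n)} G_s(u)`. -/
def ndiff (d : ℕ) (G : ℝ → E d → ℝ) (s : ℝ) (j : Fin d) (n : ℕ) (u : E d) : ℝ :=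
  G s (u + (n : ℝ)⁻¹ • EuclideanSpace.single j 1) - G s u

/-- The class `𝒮⁰(ℝ^d)`. -/
structure MemS0 (T : ℝ) (d : ℕ) (G : ℝ → E d → ℝ) : Prop where
  cont : ContinuousOn (fun p : ℝ × E d => G p.1 p.2) (Set.Icc (0:ℝ) T ×ˢ Set.univ)
  bdd : ∀ r : ℕ, ∃ C : ℝ, ∀ s ∈ Set.Icc (0:ℝ) T, ∀ u : E d, ‖u‖ ^ r * |G s u| ≤ C

/-- The class `𝒮_c⁰(ℝ^d)`. -/
structure MemS0c (T : ℝ) (d : ℕ) (G : ℝ → E d → ℝ) : Prop where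
  mem : MemS0 T d G
  csupp : ∃ K : Set (E d), IsCompact K ∧ ∀ s ∈ Set.Icc (0:ℝ) T, ∀ u ∉ K, G s u = 0

end

noncomputable section
open scoped Classical


namespace Stmt7Aux

open Real

lemma sq_rpow_half {x : ℝ} (hx : 0 ≤ x) (r : ℝ) : (x ^ 2) ^ (r / 2) = x ^ r := by
  rw [← Real.rpow_natCast x 2, ← Real.rpow_mul hx,
    show ((2 : ℕ) : ℝ) * (r / 2) = r by push_cast; ring]

lemma sqrt_rpow' {X : ℝ} (hX : 0 ≤ X) (r : ℝ) : Real.sqrt X ^ r = X ^ (r / 2) := by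
  rw [Real.sqrt_eq_rpow, ← Real.rpow_mul hX, show 1 / 2 * r = r / 2 by ring]

lemma keyK {q : ℝ} (hq : q < -1) {x : ℝ} (hx : 1 ≤ x) :
    -(q + 1) * (x + 1) ^ q ≤ x ^ (q + 1) - (x + 1) ^ (q + 1) := by
  have hx0 : (0 : ℝ) < x := by linarith
  obtain ⟨c, hc, hceq⟩ :=
    exists_hasDerivAt_eq_slope (fun y : ℝ => y ^ (q + 1))
      (fun y : ℝ => (q + 1) * y ^ (q + 1 - 1)) (by linarith : x < x + 1)
      (by
        apply ContinuousOn.rpow_const continuousOn_id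
        intro y hy
        exact Or.inl (by simp only [id]; intro h; rw [h] at hy; have := hy.1; linarith))
      (fun y hy => Real.hasDerivAt_rpow_const (Or.inl (ne_of_gt (lt_trans hx0 hy.1))))
  have hc0 : 0 < c := lt_trans hx0 hc.1
  rw [show q + 1 - 1 = q by ring] at hceq
  have hslope : (q + 1) * c ^ q = (x + 1) ^ (q + 1) - x ^ (q + 1) := by
    rw [hceq]; field_simp; ring
  have hcle : (x + 1) ^ q ≤ c ^ q :=
    Real.rpow_le_rpow_of_nonpos hc0 hc.2.le (by linarith)
  nlinarith [mul_le_mul_of_nonneg_left hcle (show (0:ℝ) ≤ -(q+1) by linarith)]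

lemma sumT {q : ℝ} (hq : q < -1) {b : ℝ} (hb : 1 ≤ b) :
    Summable (fun n : ℕ => ((n : ℝ) + b) ^ q) ∧
      ∑' n : ℕ, ((n : ℝ) + b) ^ q ≤ (1 + 1 / (-(q + 1))) * b ^ (q + 1) := by
  have hb0 : (0 : ℝ) < b := by linarith
  have hc : (0 : ℝ) < -(q + 1) := by linarith
  have key : ∀ N : ℕ, -(q + 1) * ∑ n ∈ Finset.range N, ((n : ℝ) + 1 + b) ^ q
      ≤ b ^ (q + 1) - ((N : ℝ) + b) ^ (q + 1) := by
    intro N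
    induction N with
    | zero => simp
    | succ N ihN =>
      rw [Finset.sum_range_succ, mul_add]
      have hx : 1 ≤ (N : ℝ) + b := by
        have : (0 : ℝ) ≤ (N : ℝ) := Nat.cast_nonneg N
        linarith
      have hK := keyK hq hx
      push_cast
      rw [show (N : ℝ) + 1 + b = (N : ℝ) + b + 1 by ring]
      linarith
  have claim2 : ∀ N : ℕ, ∑ n ∈ Finset.range N, ((n : ℝ) + b) ^ q
      ≤ (1 + 1 / (-(q + 1))) * b ^ (q + 1) := by
    intro N
    have hrpos : 0 < (1 + 1 / (-(q + 1))) * b ^ (q + 1) := by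
      have h1 : 0 < 1 / (-(q + 1)) := by positivity
      have h2 : 0 < b ^ (q + 1) := Real.rpow_pos_of_pos hb0 _
      nlinarith
    cases N with
    | zero => simpa using hrpos.le
    | succ M =>
      rw [Finset.sum_range_succ']
      have hX : 0 ≤ ((M : ℝ) + b) ^ (q + 1) := Real.rpow_nonneg (by positivity) _
      have h4 : -(q + 1) * ∑ n ∈ Finset.range M, ((n : ℝ) + 1 + b) ^ q ≤ b ^ (q + 1) := by
        have := key M; linarith
      have hsum : ∑ n ∈ Finset.range M, ((n : ℝ) + 1 + b) ^ q
          ≤ b ^ (q + 1) * (1 / (-(q + 1))) := by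
        rw [mul_one_div, le_div_iff₀ hc]; linarith
      have hbq : b ^ q ≤ b ^ (q + 1) :=
        Real.rpow_le_rpow_of_exponent_le hb (by linarith)
      push_cast
      simp only [zero_add]
      linarith
  have hnn : ∀ n : ℕ, 0 ≤ ((n : ℝ) + b) ^ q :=
    fun n => Real.rpow_nonneg (by positivity) _
  exact ⟨summable_of_sum_range_le hnn claim2, Real.tsum_le_of_sum_range_le hnn claim2⟩

lemma oneDim {q : ℝ} (hq : q < -1) {b : ℝ} (hb : 1 ≤ b) :
    ∑' k : ℤ, ENNReal.ofReal (((k : ℝ) ^ 2 + b ^ 2) ^ (q / 2)) ≤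
      ENNReal.ofReal (2 * 2 ^ (-q) * (1 + 1 / (-(q + 1))) * b ^ (q + 1)) := by
  have hb0 : (0 : ℝ) < b := by linarith
  have h2q : (0 : ℝ) ≤ 2 ^ (-q) := Real.rpow_nonneg (by norm_num) _
  have hterm : ∀ y : ℝ, 0 ≤ y → (y ^ 2 + b ^ 2) ^ (q / 2) ≤ 2 ^ (-q) * (y + b) ^ q := by
    intro y hy
    have h1 : 0 < y + b := by linarith
    have h3 : (y + b) ^ 2 / 2 ≤ y ^ 2 + b ^ 2 := by nlinarith [sq_nonneg (y - b)]
    have h4 : (y ^ 2 + b ^ 2) ^ (q / 2) ≤ ((y + b) ^ 2 / 2) ^ (q / 2) :=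
      Real.rpow_le_rpow_of_nonpos (by positivity) h3 (by linarith)
    have h5 : ((y + b) ^ 2 / 2) ^ (q / 2) = (y + b) ^ q / 2 ^ (q / 2) := by
      rw [Real.div_rpow (by positivity) (by norm_num), sq_rpow_half h1.le]
    have h6 : (y + b) ^ q / 2 ^ (q / 2) = (y + b) ^ q * 2 ^ (-(q / 2)) := by
      rw [Real.rpow_neg (by norm_num), div_eq_mul_inv]
    have h7 : (2 : ℝ) ^ (-(q / 2)) ≤ 2 ^ (-q) :=
      Real.rpow_le_rpow_of_exponent_le one_le_two (by linarith)
    have h8 : 0 ≤ (y + b) ^ q := Real.rpow_nonneg h1.le _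
    calc (y ^ 2 + b ^ 2) ^ (q / 2) ≤ (y + b) ^ q * 2 ^ (-(q / 2)) := by
          rw [← h6, ← h5]; exact h4
      _ ≤ 2 ^ (-q) * (y + b) ^ q := by nlinarith
  have hSummable := (sumT hq hb).1
  have hSumBound := (sumT hq hb).2
  have hnn : ∀ n : ℕ, 0 ≤ 2 ^ (-q) * ((n : ℝ) + b) ^ q := by
    intro n
    have : (0:ℝ) ≤ ((n : ℝ) + b) ^ q := Real.rpow_nonneg (by positivity) _
    positivity
  have hnat : ∑' n : ℕ, ENNReal.ofReal (2 ^ (-q) * ((n : ℝ) + b) ^ q) ≤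
      ENNReal.ofReal (2 ^ (-q) * ((1 + 1 / (-(q + 1))) * b ^ (q + 1))) := by
    rw [← ENNReal.ofReal_tsum_of_nonneg hnn (hSummable.mul_left _)]
    apply ENNReal.ofReal_le_ofReal
    rw [tsum_mul_left]
    exact mul_le_mul_of_nonneg_left hSumBound h2q
  rw [tsum_of_nat_of_neg_add_one ENNReal.summable ENNReal.summable]
  have hpos : ∑' n : ℕ, ENNReal.ofReal ((((n : ℤ) : ℝ) ^ 2 + b ^ 2) ^ (q / 2)) ≤
      ENNReal.ofReal (2 ^ (-q) * ((1 + 1 / (-(q + 1))) * b ^ (q + 1))) := by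
    refine le_trans (ENNReal.tsum_le_tsum fun n => ?_) hnat
    apply ENNReal.ofReal_le_ofReal
    push_cast
    exact hterm n (Nat.cast_nonneg n)
  have hneg : ∑' n : ℕ, ENNReal.ofReal (((((-((n : ℤ) + 1)) : ℤ) : ℝ) ^ 2 + b ^ 2) ^ (q / 2)) ≤
      ENNReal.ofReal (2 ^ (-q) * ((1 + 1 / (-(q + 1))) * b ^ (q + 1))) := by
    refine le_trans (ENNReal.tsum_le_tsum fun n => ?_) hnat
    apply ENNReal.ofReal_le_ofReal
    have e1 : ((((-((n : ℤ) + 1)) : ℤ) : ℝ)) ^ 2 = ((n : ℝ) + 1) ^ 2 := by push_cast; ring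
    rw [e1]
    refine le_trans (hterm ((n : ℝ) + 1) (by positivity)) ?_
    apply mul_le_mul_of_nonneg_left _ h2q
    exact Real.rpow_le_rpow_of_nonpos (by positivity) (by linarith) (by linarith)
  have hX : 0 ≤ 2 ^ (-q) * ((1 + 1 / (-(q + 1))) * b ^ (q + 1)) := by
    have h9 : 0 ≤ 1 / (-(q + 1)) := le_of_lt (one_div_pos.mpr (by linarith))
    have h10 : 0 ≤ b ^ (q + 1) := Real.rpow_nonneg hb0.le _
    have h11 : 0 ≤ 1 + 1 / (-(q + 1)) := by linarith
    exact mul_nonneg h2q (mul_nonneg h11 h10)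
  refine le_trans (add_le_add hpos hneg) ?_
  rw [← ENNReal.ofReal_add hX hX]
  apply ENNReal.ofReal_le_ofReal
  apply le_of_eq
  ring

lemma multiD (d : ℕ) : ∀ q : ℝ, q + (d : ℝ) < 0 → ∃ C : ℝ, 0 < C ∧ ∀ b : ℝ, 1 ≤ b →
    ∑' w : Fin d → ℤ, ENNReal.ofReal ((∑ i, ((w i : ℝ)) ^ 2 + b ^ 2) ^ (q / 2)) ≤
      ENNReal.ofReal (C * b ^ (q + (d : ℝ))) := by
  induction d with
  | zero =>
    intro q hq
    refine ⟨1, one_pos, fun b hb => ?_⟩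
    have hb0 : (0 : ℝ) < b := by linarith
    rw [tsum_eq_single (default : Fin 0 → ℤ)
      (fun b' hb' => absurd (Subsingleton.elim b' default) hb')]
    simp only [Finset.univ_eq_empty, Finset.sum_empty, zero_add, Nat.cast_zero, add_zero, one_mul]
    rw [sq_rpow_half hb0.le]
  | succ d ih =>
    intro q hq
    have hd0 : (0 : ℝ) ≤ (d : ℝ) := Nat.cast_nonneg d
    have hdc : ((d + 1 : ℕ) : ℝ) = (d : ℝ) + 1 := by push_cast; ring
    rw [hdc] at hq
    have hq1 : q < -1 := by linarith
    have hq2 : (q + 1) + (d : ℝ) < 0 := by linarith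
    obtain ⟨C₂, hC₂pos, hC₂⟩ := ih (q + 1) hq2
    have hC₁pos : 0 < 2 * 2 ^ (-q) * (1 + 1 / (-(q + 1))) := by
      have h1 : (0 : ℝ) < 2 ^ (-q) := Real.rpow_pos_of_pos (by norm_num) _
      have h2 : (0 : ℝ) < 1 / (-(q + 1)) := one_div_pos.mpr (by linarith)
      nlinarith
    refine ⟨2 * 2 ^ (-q) * (1 + 1 / (-(q + 1))) * C₂,
      mul_pos hC₁pos hC₂pos, fun b hb => ?_⟩
    have hb0 : (0 : ℝ) < b := by linarith
    rw [← (Fin.snocEquiv (fun _ => ℤ)).tsum_eq, ENNReal.tsum_prod', ENNReal.tsum_comm]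
    have inner : ∀ w' : Fin d → ℤ,
        ∑' k : ℤ, ENNReal.ofReal
            ((∑ i, (((Fin.snocEquiv (fun _ => ℤ) (k, w')) i : ℝ)) ^ 2 + b ^ 2) ^ (q / 2))
          ≤ ENNReal.ofReal ((2 * 2 ^ (-q) * (1 + 1 / (-(q + 1)))) *
              ((∑ i, ((w' i : ℝ)) ^ 2 + b ^ 2) ^ ((q + 1) / 2))) := by
      intro w'
      set S : ℝ := ∑ i, ((w' i : ℝ)) ^ 2 with hS
      have hSnn : 0 ≤ S := Finset.sum_nonneg fun i _ => sq_nonneg _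
      set c : ℝ := Real.sqrt (S + b ^ 2) with hc
      have hc2 : c ^ 2 = S + b ^ 2 := Real.sq_sqrt (by positivity)
      have hc1 : 1 ≤ c := by
        nlinarith [Real.sqrt_nonneg (S + b ^ 2), hc2]
      have harg : ∀ k : ℤ,
          (∑ i, (((Fin.snocEquiv (fun _ => ℤ) (k, w')) i : ℝ)) ^ 2 + b ^ 2)
            = (k : ℝ) ^ 2 + c ^ 2 := by
        intro k
        rw [hc2]
        have : ∑ i, (((Fin.snocEquiv (fun _ => ℤ) (k, w')) i : ℝ)) ^ 2
            = S + (k : ℝ) ^ 2 := by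
          rw [Fin.sum_univ_castSucc]
          simp only [Fin.snocEquiv_apply, Fin.snoc_castSucc, Fin.snoc_last, hS]
        rw [this]; ring
      calc ∑' k : ℤ, ENNReal.ofReal
            ((∑ i, (((Fin.snocEquiv (fun _ => ℤ) (k, w')) i : ℝ)) ^ 2 + b ^ 2) ^ (q / 2))
          = ∑' k : ℤ, ENNReal.ofReal (((k : ℝ) ^ 2 + c ^ 2) ^ (q / 2)) := by
            exact tsum_congr fun k => by rw [harg k]
        _ ≤ ENNReal.ofReal (2 * 2 ^ (-q) * (1 + 1 / (-(q + 1))) * c ^ (q + 1)) :=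
            oneDim hq1 hc1
        _ = ENNReal.ofReal ((2 * 2 ^ (-q) * (1 + 1 / (-(q + 1)))) *
              ((S + b ^ 2) ^ ((q + 1) / 2))) := by
            rw [hc, sqrt_rpow' (by positivity)]
    refine le_trans (ENNReal.tsum_le_tsum inner) ?_
    have hmul : ∀ w' : Fin d → ℤ,
        ENNReal.ofReal ((2 * 2 ^ (-q) * (1 + 1 / (-(q + 1)))) *
            ((∑ i, ((w' i : ℝ)) ^ 2 + b ^ 2) ^ ((q + 1) / 2)))
          = ENNReal.ofReal (2 * 2 ^ (-q) * (1 + 1 / (-(q + 1)))) *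
            ENNReal.ofReal ((∑ i, ((w' i : ℝ)) ^ 2 + b ^ 2) ^ ((q + 1) / 2)) :=
      fun w' => ENNReal.ofReal_mul hC₁pos.le
    calc ∑' w' : Fin d → ℤ, ENNReal.ofReal ((2 * 2 ^ (-q) * (1 + 1 / (-(q + 1)))) *
            ((∑ i, ((w' i : ℝ)) ^ 2 + b ^ 2) ^ ((q + 1) / 2)))
        = ENNReal.ofReal (2 * 2 ^ (-q) * (1 + 1 / (-(q + 1)))) *
            ∑' w' : Fin d → ℤ, ENNReal.ofReal
              ((∑ i, ((w' i : ℝ)) ^ 2 + b ^ 2) ^ ((q + 1) / 2)) := by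
          rw [← ENNReal.tsum_mul_left]; exact tsum_congr hmul
      _ ≤ ENNReal.ofReal (2 * 2 ^ (-q) * (1 + 1 / (-(q + 1)))) *
            ENNReal.ofReal (C₂ * b ^ ((q + 1) + (d : ℝ))) :=
          mul_le_mul_right (hC₂ b hb) _
      _ = ENNReal.ofReal (2 * 2 ^ (-q) * (1 + 1 / (-(q + 1))) * C₂ *
            b ^ (q + ((d + 1 : ℕ) : ℝ))) := by
          rw [← ENNReal.ofReal_mul hC₁pos.le, hdc,
            show q + ((d : ℝ) + 1) = (q + 1) + (d : ℝ) by ring]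
          ring_nf
      _ ≤ _ := le_refl _

end Stmt7Aux

theorem stmt7 (j : ℕ) (hj : 1 ≤ j) (q : ℝ) (hq : q + (j : ℝ) - 1 < 0) :
    ∃ C : ℝ, 0 < C ∧ ∀ z : ℤ, z ≠ 0 →
      (∑' w : Fin (j - 1) → ℤ,
          ‖emb j (fun i => if h : (i : ℕ) < j - 1 then w ⟨i, h⟩ else z)‖ ^ q)
        ≤ C * |(z : ℝ)| ^ (q + (j : ℝ) - 1) := by
  obtain ⟨d, rfl⟩ : ∃ d, j = d + 1 := ⟨j - 1, (Nat.succ_pred_eq_of_pos hj).symm⟩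
  simp only [Nat.add_sub_cancel]
  have hqd : q + (d : ℝ) < 0 := by push_cast at hq; linarith
  obtain ⟨C, hCpos, hC⟩ := Stmt7Aux.multiD d q hqd
  refine ⟨C, hCpos, fun z hz => ?_⟩
  have hb : (1 : ℝ) ≤ |(z : ℝ)| := by
    rw [← Int.cast_abs]
    exact_mod_cast Int.one_le_abs hz
  have hb0 : (0 : ℝ) < |(z : ℝ)| := by linarith
  have key := hC _ hb
  have hterm : ∀ w : Fin d → ℤ,
      ‖emb (d + 1) (fun i => if h : (i : ℕ) < d then w ⟨i, h⟩ else z)‖ ^ q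
        = (∑ i, ((w i : ℝ)) ^ 2 + |(z : ℝ)| ^ 2) ^ (q / 2) := by
    intro w
    have hnorm : ‖emb (d + 1) (fun i => if h : (i : ℕ) < d then w ⟨i, h⟩ else z)‖
        = Real.sqrt (∑ i : Fin (d + 1),
            (((if h : (i : ℕ) < d then w ⟨i, h⟩ else z : ℤ)) : ℝ) ^ 2) := by
      rw [EuclideanSpace.norm_eq]
      congr 1
      refine Finset.sum_congr rfl fun i _ => ?_
      simp [emb, sq_abs]
    have hsplit : ∑ i : Fin (d + 1),
          (((if h : (i : ℕ) < d then w ⟨i, h⟩ else z : ℤ)) : ℝ) ^ 2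
        = ∑ i, ((w i : ℝ)) ^ 2 + |(z : ℝ)| ^ 2 := by
      rw [Fin.sum_univ_castSucc, sq_abs]
      congr 1
      · refine Finset.sum_congr rfl fun i _ => ?_
        have hi : ((Fin.castSucc i : Fin (d + 1)) : ℕ) < d := i.isLt
        rw [dif_pos hi]
        rfl
      · rw [dif_neg]
        simp [Fin.last]
    have hX : (0 : ℝ) ≤ ∑ i, ((w i : ℝ)) ^ 2 + |(z : ℝ)| ^ 2 := by
      have : (0:ℝ) ≤ ∑ i, ((w i : ℝ)) ^ 2 := Finset.sum_nonneg fun i _ => sq_nonneg _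
      positivity
    rw [hnorm, hsplit, Stmt7Aux.sqrt_rpow' hX]
  have hfnn : ∀ w : Fin d → ℤ,
      0 ≤ (∑ i, ((w i : ℝ)) ^ 2 + |(z : ℝ)| ^ 2) ^ (q / 2) := by
    intro w
    apply Real.rpow_nonneg
    have : (0:ℝ) ≤ ∑ i, ((w i : ℝ)) ^ 2 := Finset.sum_nonneg fun i _ => sq_nonneg _
    positivity
  calc ∑' w : Fin d → ℤ,
        ‖emb (d + 1) (fun i => if h : (i : ℕ) < d then w ⟨i, h⟩ else z)‖ ^ q
      = ∑' w : Fin d → ℤ, (∑ i, ((w i : ℝ)) ^ 2 + |(z : ℝ)| ^ 2) ^ (q / 2) :=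
        tsum_congr hterm
    _ = ∑' w : Fin d → ℤ, (ENNReal.ofReal
          ((∑ i, ((w i : ℝ)) ^ 2 + |(z : ℝ)| ^ 2) ^ (q / 2))).toReal :=
        tsum_congr fun w => (ENNReal.toReal_ofReal (hfnn w)).symm
    _ = (∑' w : Fin d → ℤ, ENNReal.ofReal
          ((∑ i, ((w i : ℝ)) ^ 2 + |(z : ℝ)| ^ 2) ^ (q / 2))).toReal :=
        (ENNReal.tsum_toReal_eq fun w => ENNReal.ofReal_ne_top).symm
    _ ≤ (ENNReal.ofReal (C * |(z : ℝ)| ^ (q + (d : ℝ)))).toReal :=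
        ENNReal.toReal_mono ENNReal.ofReal_ne_top key
    _ = C * |(z : ℝ)| ^ (q + (d : ℝ)) :=
        ENNReal.toReal_ofReal (mul_nonneg hCpos.le (Real.rpow_nonneg hb0.le _))
    _ = C * |(z : ℝ)| ^ (q + ((d + 1 : ℕ) : ℝ) - 1) := by
        rw [show q + ((d + 1 : ℕ) : ℝ) - 1 = q + (d : ℝ) by push_cast; ring]

end
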